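/- arXiv:0806.4802 — 2 statements merged into one kernel-verified Lean document; each statement's English description precedes it below -/
import Mathlib

section
/- Let α ∈ (0, 1/800), let x ≤ 0, and let r ∈ [−2, 2]. Then Φ(x) = 1 and Φ((1−α)·x + √α·r) ≤ Φ(2√α) = exp(α/2) < 1 + (3/5)·α. In particular, for an action whose current scaled regret is nonpositive, the potential after one NormalHedge update is less than 1 + (3/5)·α. -/
/-- The NormalHedge potential function: `Φ(x) = exp(x²/8)` for `x > 0`, `1` for `x ≤ 0`. -/
noncomputable def Phi (x : ℝ) : ℝ := if 0 < x then Real.exp (x ^ 2 / 8) else 1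

lemma Phi_of_nonpos {x : ℝ} (hx : x ≤ 0) : Phi x = 1 :=
  if_neg hx.not_gt

lemma Phi_of_pos {x : ℝ} (hx : 0 < x) : Phi x = Real.exp (x ^ 2 / 8) :=
  if_pos hx

lemma one_le_Phi (x : ℝ) : 1 ≤ Phi x := by
  unfold Phi
  split_ifs
  · exact Real.one_le_exp (by positivity)
  · exact le_rfl

lemma Phi_monotone : Monotone Phi := by
  intro a b hab
  rcases le_or_gt a 0 with ha | ha
  · rw [Phi_of_nonpos ha]
    exact one_le_Phi b
  · rw [Phi_of_pos ha, Phi_of_pos (ha.trans_le hab)]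
    exact Real.exp_le_exp.2 (by gcongr)

lemma Phi_two_mul_sqrt {α : ℝ} (hα : 0 < α) : Phi (2 * Real.sqrt α) = Real.exp (α / 2) := by
  rw [Phi_of_pos (by positivity), mul_pow, Real.sq_sqrt hα.le]
  ring_nf

lemma discounted_update_le_of_nonpos {α x r : ℝ} (hα1 : α ≤ 1) (hx : x ≤ 0) (hr : r ≤ 2) :
    (1 - α) * x + Real.sqrt α * r ≤ 2 * Real.sqrt α := by
  have hdiscount : (1 - α) * x ≤ 0 := mul_nonpos_of_nonneg_of_nonpos (by linarith) hx
  have hstep : Real.sqrt α * r ≤ Real.sqrt α * 2 :=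
    mul_le_mul_of_nonneg_left hr (Real.sqrt_nonneg α)
  linarith

lemma Real.exp_half_lt_one_add_three_fifths_mul {α : ℝ} (hα0 : 0 < α) (hα1 : α ≤ 1 / 3) :
    Real.exp (α / 2) < 1 + 3 / 5 * α := by
  have hpos : 0 < 1 - α / 2 := by linarith
  calc Real.exp (α / 2) < 1 / (1 - α / 2) :=
        Real.exp_bound_div_one_sub_of_interval' (by positivity) (by linarith)
    _ ≤ 1 + 3 / 5 * α := by
        rw [div_le_iff₀ hpos]
        nlinarith

/-- for `α ∈ (0, 1/800)`, `x ≤ 0`, `r ∈ [-2,2]`: `Φ(x) = 1`,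
`Φ((1-α)x + √α·r) ≤ Φ(2√α) = exp(α/2) < 1 + (3/5)α`. -/
theorem normalHedge_nonpositive_regret_potential_step
    (α : ℝ) (hα0 : 0 < α) (hα1 : α < 1 / 800)
    (x : ℝ) (hx : x ≤ 0)
    (r : ℝ) (hr : r ∈ Set.Icc (-2 : ℝ) 2) :
    Phi x = 1 ∧
    Phi ((1 - α) * x + Real.sqrt α * r) ≤ Phi (2 * Real.sqrt α) ∧
    Phi (2 * Real.sqrt α) = Real.exp (α / 2) ∧
    Real.exp (α / 2) < 1 + (3 / 5) * α :=
  ⟨Phi_of_nonpos hx,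
    Phi_monotone (discounted_update_le_of_nonpos (by linarith) hx hr.2),
    Phi_two_mul_sqrt hα0,
    Real.exp_half_lt_one_add_three_fifths_mul hα0 (by linarith)⟩
end

section
/- In the discounted Hedge setting, the log-weight-sum satisfies ln(W_j/N) ≤ η·Ĝ_A^j + η²/(4·(α − α²/2)). -/
open Finset

/-- Adjusted cumulative gain of action `i` at the start of round `k` (horizon `j`):
`Ĝ_i^k = Σ_{s=1}^{k-1} (1-α)^{j-1-s}·g_i^s`. -/
noncomputable def Ghat {N : ℕ} (α : ℝ) (j : ℕ) (g : Fin N → ℕ → ℝ)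
    (i : Fin N) (k : ℕ) : ℝ :=
  ∑ s ∈ Finset.Icc 1 (k - 1), (1 - α) ^ (j - 1 - s) * g i s

/-- Hedge's gain in round `k`:
`g_A^k = (Σᵢ e^{η·Ĝ_i^k}·g_i^k) / (Σᵢ e^{η·Ĝ_i^k})`. -/
noncomputable def hedgeGain {N : ℕ} (α η : ℝ) (j : ℕ) (g : Fin N → ℕ → ℝ)
    (k : ℕ) : ℝ :=
  (∑ i, Real.exp (η * Ghat α j g i k) * g i k) /
    ∑ i, Real.exp (η * Ghat α j g i k)

/-- Hedge's adjusted cumulative gain at the start of round `j`: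
`Ĝ_A^j = Σ_{s=1}^{j-1} (1-α)^{j-1-s}·g_A^s`. -/
noncomputable def GhatA {N : ℕ} (α η : ℝ) (j : ℕ) (g : Fin N → ℕ → ℝ) : ℝ :=
  ∑ s ∈ Finset.Icc 1 (j - 1), (1 - α) ^ (j - 1 - s) * hedgeGain α η j g s

/-- The weight sum at the start of round `k`: `W_k = Σᵢ e^{η·Ĝ_i^k}`. -/
noncomputable def Wsum {N : ℕ} (α η : ℝ) (j : ℕ) (g : Fin N → ℕ → ℝ) (k : ℕ) : ℝ :=
  ∑ i, Real.exp (η * Ghat α j g i k)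

/-! Each round `k` multiplies the weight sum by the moment generating function, at
`t = η (1 - α)^(j-1-k)`, of the round's gains under Hedge's current distribution; by Hoeffding's
lemma this factor is at most `exp (t · g_A^k + t² / 2)`. Taking logarithms and telescoping gives
`ln (W_j / N) ≤ η Ĝ_A^j + η²/2 · Σ_k (1 - α)^(2(j-1-k))`, and the geometric series is at most
`1 / (1 - (1 - α)²) = 1 / (2α - α²)`. -/

open ProbabilityTheory MeasureTheory

theorem sum_mul_exp_le_exp_of_mem_Icc {ι : Type*} [Fintype ι] {p x : ι → ℝ}
    (hp : ∀ i, 0 ≤ p i) (hp1 : ∑ i, p i = 1) (hx : ∀ i, x i ∈ Set.Icc (-1 : ℝ) 1) (t : ℝ) :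
    ∑ i, p i * Real.exp (t * x i) ≤ Real.exp (t * ∑ i, p i * x i + t ^ 2 / 2) := by
  let _ : MeasurableSpace ι := ⊤
  have hsum : ∑ i, ENNReal.ofReal (p i) = 1 := by
    rw [← ENNReal.ofReal_sum_of_nonneg fun i _ => hp i, hp1, ENNReal.ofReal_one]
  set μ := (PMF.ofFintype _ hsum).toMeasure
  have hint (f : ι → ℝ) : ∫ i, f i ∂μ = ∑ i, p i * f i := by
    simp [μ, PMF.integral_eq_sum, ENNReal.toReal_ofReal (hp _)]
  have hoeffding := (hasSubgaussianMGF_of_mem_Icc (μ := μ) (X := x)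
    Measurable.of_discrete.aemeasurable (ae_of_all _ hx)).mgf_le t
  have hc : (‖(1 : ℝ) - -1‖₊ / 2) ^ 2 = 1 := by
    rw [sub_neg_eq_add, one_add_one_eq_two, Real.nnnorm_ofNat, div_self two_ne_zero, one_pow]
  rw [mgf, hint, hint x, hc, NNReal.coe_one, one_mul] at hoeffding
  set m := ∑ i, p i * x i
  have hshift (i : ι) : Real.exp (t * (x i - m)) = Real.exp (t * x i) * Real.exp (-(t * m)) := by
    rw [← Real.exp_add]; ring_nf
  simp only [hshift, ← mul_assoc, ← Finset.sum_mul, Real.exp_neg] at hoeffding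
  rw [Real.exp_add, mul_comm]
  rwa [mul_inv_le_iff₀ (Real.exp_pos _)] at hoeffding

theorem sum_mul_exp_le_of_mem_Icc {ι : Type*} [Fintype ι] {w x : ι → ℝ}
    (hw : ∀ i, 0 ≤ w i) (hW : 0 < ∑ i, w i) (hx : ∀ i, x i ∈ Set.Icc (-1 : ℝ) 1) (t : ℝ) :
    ∑ i, w i * Real.exp (t * x i) ≤
      (∑ i, w i) * Real.exp (t * ((∑ i, w i * x i) / ∑ i, w i) + t ^ 2 / 2) := by
  have key := sum_mul_exp_le_exp_of_mem_Icc (p := fun i => w i / ∑ i, w i)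
    (fun i => div_nonneg (hw i) hW.le) (by rw [← Finset.sum_div, div_self hW.ne']) hx t
  simp only [div_mul_eq_mul_div, ← Finset.sum_div] at key
  rwa [div_le_iff₀' hW] at key

theorem sum_Ico_pow_sub_le {q : ℝ} (hq0 : 0 ≤ q) (hq1 : q < 1) (n : ℕ) :
    ∑ s ∈ Ico 1 n, q ^ (n - 1 - s) ≤ (1 - q)⁻¹ := by
  rcases n with _ | n
  · simpa using hq1.le
  · rw [Nat.add_sub_cancel, sum_Ico_reflect (q ^ ·) 1 le_rfl, Nat.sub_self, Nat.add_sub_cancel,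
      inv_eq_one_div, ← pow_zero q]
    exact geom_sum_Ico_le_of_lt_one hq0 hq1

section DiscountedHedge

variable {N : ℕ} {α η : ℝ} {j : ℕ} {g : Fin N → ℕ → ℝ}

theorem Ghat_succ (i : Fin N) {k : ℕ} (hk : 1 ≤ k) :
    Ghat α j g i (k + 1) = Ghat α j g i k + (1 - α) ^ (j - 1 - k) * g i k := by
  rw [Ghat, Ghat, Nat.add_sub_cancel, ← insert_Icc_sub_one_right_eq_Icc hk,
    sum_insert (by simp; omega), add_comm]

theorem Wsum_one : Wsum α η j g 1 = N := by
  simp [Wsum, Ghat]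

theorem Wsum_pos (hN : 1 ≤ N) (k : ℕ) : 0 < Wsum α η j g k :=
  have : Nonempty (Fin N) := ⟨⟨0, hN⟩⟩
  sum_pos (fun _ _ => Real.exp_pos _) univ_nonempty

theorem log_Wsum_succ_le (hN : 1 ≤ N) {k : ℕ} (hk : 1 ≤ k)
    (hg : ∀ i, g i k ∈ Set.Icc (-1 : ℝ) 1) :
    Real.log (Wsum α η j g (k + 1)) ≤ Real.log (Wsum α η j g k) +
      η * ((1 - α) ^ (j - 1 - k) * hedgeGain α η j g k) +
        η ^ 2 / 2 * ((1 - α) ^ 2) ^ (j - 1 - k) := by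
  have hrec : Wsum α η j g (k + 1) =
      ∑ i, Real.exp (η * Ghat α j g i k) * Real.exp (η * (1 - α) ^ (j - 1 - k) * g i k) := by
    refine sum_congr rfl fun i _ => ?_
    rw [← Real.exp_add, Ghat_succ i hk]
    ring_nf
  have hW : 0 < Wsum α η j g k := Wsum_pos hN k
  have hstep : Wsum α η j g (k + 1) ≤ Wsum α η j g k * Real.exp
      (η * (1 - α) ^ (j - 1 - k) * hedgeGain α η j g k + (η * (1 - α) ^ (j - 1 - k)) ^ 2 / 2) := by
    rw [hrec]
    exact sum_mul_exp_le_of_mem_Icc (fun _ => (Real.exp_pos _).le) hW hg _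
  calc _ ≤ _ := Real.log_le_log (Wsum_pos hN _) hstep
    _ = _ := by
      rw [Real.log_mul hW.ne' (Real.exp_pos _).ne', Real.log_exp, mul_pow, ← pow_mul, mul_comm _ 2,
        pow_mul]
      ring

end DiscountedHedge

theorem discountedHedge_log_weight_bound_general
    (N : ℕ) (hN : 1 ≤ N)
    (α : ℝ) (hα0 : 0 < α) (hα1 : α < 1)
    (η : ℝ)
    (j : ℕ) (hj : 1 ≤ j)
    (g : Fin N → ℕ → ℝ)
    (hg : ∀ (i : Fin N) (k : ℕ), 1 ≤ k → k ≤ j - 1 → g i k ∈ Set.Icc (-1 : ℝ) 1)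
    : Real.log (Wsum α η j g j / N) ≤
        η * GhatA α η j g + η ^ 2 / (4 * (α - α ^ 2 / 2)) := by
  set q := (1 - α) ^ 2
  have hq1 : q < 1 := by nlinarith
  have hconst : η ^ 2 / 2 * (1 - q)⁻¹ = η ^ 2 / (4 * (α - α ^ 2 / 2)) := by
    rw [← div_eq_mul_inv, div_div]; ring
  have hstep : ∀ k ∈ Ico 1 j, Real.log (Wsum α η j g (k + 1)) - Real.log (Wsum α η j g k) ≤
      η * ((1 - α) ^ (j - 1 - k) * hedgeGain α η j g k) + η ^ 2 / 2 * q ^ (j - 1 - k) := by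
    intro k hk
    rw [mem_Ico] at hk
    linarith [log_Wsum_succ_le (α := α) (η := η) (j := j) hN hk.1 fun i => hg i k hk.1 (by omega)]
  calc Real.log (Wsum α η j g j / N)
      = ∑ k ∈ Ico 1 j, (Real.log (Wsum α η j g (k + 1)) - Real.log (Wsum α η j g k)) := by
        rw [sum_Ico_sub (fun k => Real.log (Wsum α η j g k)) hj, Wsum_one,
          Real.log_div (Wsum_pos hN j).ne' (by positivity)]
    _ ≤ ∑ k ∈ Ico 1 j, (η * ((1 - α) ^ (j - 1 - k) * hedgeGain α η j g k) +
          η ^ 2 / 2 * q ^ (j - 1 - k)) := sum_le_sum hstep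
    _ = η * GhatA α η j g + η ^ 2 / 2 * ∑ k ∈ Ico 1 j, q ^ (j - 1 - k) := by
        rw [sum_add_distrib, ← mul_sum, ← mul_sum, GhatA,
          Icc_sub_one_right_eq_Ico_of_not_isMin (not_isMin_of_lt hj)]
    _ ≤ η * GhatA α η j g + η ^ 2 / (4 * (α - α ^ 2 / 2)) := by
        rw [← hconst]
        gcongr
        exact sum_Ico_pow_sub_le (sq_nonneg _) hq1 j

/-- the log-weight-sum of discounted Hedge satisfies
`ln(W_j/N) ≤ η·Ĝ_A^j + η²/(4(α - α²/2))`. -/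
theorem discountedHedge_log_weight_bound
    (N : ℕ) (hN : 1 ≤ N)
    (α : ℝ) (hα0 : 0 < α) (hα1 : α < 1)
    (η : ℝ) (hη : 0 < η)
    (j : ℕ) (hj : 1 ≤ j)
    (g : Fin N → ℕ → ℝ)
    (hg : ∀ (i : Fin N) (k : ℕ), 1 ≤ k → k ≤ j - 1 → g i k ∈ Set.Icc (-1 : ℝ) 1)
    : Real.log (Wsum α η j g j / N) ≤
        η * GhatA α η j g + η ^ 2 / (4 * (α - α ^ 2 / 2)) :=
  discountedHedge_log_weight_bound_general N hN α hα0 hα1 η j hj g hg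
end
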